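/- Let A be a unital complex *-algebra and let u be a magic unitary for the graph O^-(6,2) over A. Then for all vertices i, j, k, l such that (i,k) is not an edge and (j,l) is not an edge (equal vertices allowed), one has u_{ij} * u_{kl} = u_{kl} * u_{ij}. -/

import Mathlib

/-- The quadratic form `Q(v) = v₀v₁ + v₂v₃ + v₄² + v₄v₅ + v₅²` on `F₂⁶`. -/
def Q2 (v : Fin 6 → ZMod 2) : ZMod 2 :=
  v 0 * v 1 + v 2 * v 3 + v 4 ^ 2 + v 4 * v 5 + v 5 ^ 2

/-- The vertex set of `O⁻(6,2)`: nonzero vectors of `F₂⁶` with `Q(v) = 0`. -/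
def OVert2 : Type := {v : Fin 6 → ZMod 2 // v ≠ 0 ∧ Q2 v = 0}

instance : Fintype OVert2 :=
  inferInstanceAs (Fintype {v : Fin 6 → ZMod 2 // v ≠ 0 ∧ Q2 v = 0})

/-- The graph `O⁻(6,2)`: two distinct singular nonzero vectors `v, w` are adjacent iff
`Q(v + w) = 0`. -/
def OMinus62 : SimpleGraph OVert2 where
  Adj v w := v ≠ w ∧ Q2 (v.1 + w.1) = 0
  symm := by
    refine ⟨?_⟩
    rintro v w ⟨h1, h2⟩
    exact ⟨h1.symm, by rwa [add_comm w.1 v.1]⟩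
  loopless := ⟨fun v h => h.1 rfl⟩

/-- A magic unitary for a finite simple graph `X` over a unital complex `*`-algebra `A`:
a family `u i j` of self-adjoint idempotents whose rows and columns are orthogonal and
sum to `1`, with `u i j * u k l = 0` whenever exactly one of `(i,k)`, `(j,l)` is an edge. -/
structure IsMagicUnitary {V : Type*} [Fintype V] (X : SimpleGraph V) (A : Type*)
    [Ring A] [StarRing A] [Algebra ℂ A] (u : V → V → A) : Prop where
  star_self : ∀ i j, star (u i j) = u i j
  idem : ∀ i j, u i j * u i j = u i j
  row_orth : ∀ i j k, j ≠ k → u i j * u i k = 0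
  col_orth : ∀ i j k, j ≠ k → u j i * u k i = 0
  row_sum : ∀ i, ∑ k, u i k = 1
  col_sum : ∀ i, ∑ k, u k i = 1
  adj_mul_eq_zero : ∀ i j k l, X.Adj i k → ¬X.Adj j l → u i j * u k l = 0
  adj_mul_eq_zero' : ∀ i j k l, ¬X.Adj i k → X.Adj j l → u i j * u k l = 0

namespace O62Aux

def adjRow : Nat → Nat
  | 0 => 8263776
  | 1 => 59648160
  | 2 => 123881760
  | 3 => 114592288
  | 4 => 96013344
  | 5 => 2015
  | 6 => 125952033
  | 7 => 74567714
  | 8 => 10334244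
  | 9 => 19623976
  | 10 => 38203440
  | 11 => 127007
  | 12 => 125833089
  | 13 => 74452802
  | 14 => 10227396
  | 15 => 19533256
  | 16 => 38144976
  | 17 => 76645895
  | 18 => 86066443
  | 19 => 104907539
  | 20 => 50487705
  | 21 => 42246805
  | 22 => 25765005
  | 23 => 6443354
  | 24 => 5542486
  | 25 => 3740750
  | 26 => 930012
  | _ => 0

def tauRow : Nat → Nat
  | 0 => 25416025164216790839151496714518528
  | 1 => 832802878755070435175949824980621983744
  | 2 => 24061717347601184362122939393556309082112
  | 3 => 25351980067287406095238839696345750568960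
  | 4 => 25888917716223690976040518806786902327296
  | 5 => 4611386137420006
  | 6 => 18395767770915637823762874367843166584837
  | 7 => 16333575007611904311665228635491851567264
  | 8 => 498477591917885133715180520336266240
  | 9 => 15951263847305368010377370177405878272
  | 10 => 510440425364110042661235601156852416512
  | 11 => 4951438150776970442946988
  | 12 => 9965554591398460528128096500791535206411
  | 13 => 8166790162069247127746026307112342126944
  | 14 => 249239491670005030911589227985644544
  | 15 => 7975652245743452680270057660800663552
  | 16 => 255220861720457974496357673240290656256
  | 17 => 2722300473742387244449737716107524991732
  | 18 => 4084717631047056160645888000639892259605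
  | 19 => 5487053166600133036203695544025168741174
  | 20 => 132922799578491595849669971003979890705
  | 21 => 85236745229707995134521519679638365202
  | 22 => 2783071116183130458579167159421493267
  | 23 => 4056481959423053085567134365057568
  | 24 => 2601220269835049985145022900623936
  | 25 => 84972211550114962482713066100320
  | 26 => 162247516628271532122025051136
  | _ => 0

def vbits : Nat → Nat
  | 0 => 8
  | 1 => 4
  | 2 => 44
  | 3 => 28
  | 4 => 60
  | 5 => 2
  | 6 => 10
  | 7 => 6
  | 8 => 46
  | 9 => 30
  | 10 => 62
  | 11 => 1
  | 12 => 9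
  | 13 => 5
  | 14 => 45
  | 15 => 29
  | 16 => 61
  | 17 => 35
  | 18 => 19
  | 19 => 51
  | 20 => 43
  | 21 => 27
  | 22 => 59
  | 23 => 39
  | 24 => 23
  | 25 => 55
  | 26 => 15
  | _ => 0

def gadj (a b : Fin 27) : Bool := (adjRow a.val >>> b.val) % 2 == 1

def gtau (a b : Fin 27) : Fin 27 := ⟨(tauRow a.val >>> (5 * b.val)) % 32 % 27,
  Nat.mod_lt _ (by norm_num)⟩

theorem gsymm : ∀ a b : Fin 27, gadj a b = gadj b a := by decide

theorem girrefl : ∀ a : Fin 27, gadj a a = false := by decide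

theorem ftau : ∀ a b : Fin 27, gadj a b = true →
    gadj (gtau a b) a = true ∧ gadj (gtau a b) b = true ∧ gtau a b ≠ a ∧ gtau a b ≠ b := by
  decide

theorem ftau2 : ∀ a b y : Fin 27, gadj a b = true → gadj y a = true → gadj y b = true →
    y = gtau a b := by decide

theorem fgq : ∀ a b c : Fin 27, gadj a b = true → gadj a c = false → a ≠ c →
    gadj b c = false → b ≠ c → gadj (gtau a b) c = true := by decide

theorem f5 : ∀ a b c : Fin 27, gadj a b = true → gadj a c = true → gadj b c = false → b ≠ c →
    gadj (gtau a b) c = false ∧ gtau a b ≠ c := by decide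

set_option maxHeartbeats 4000000 in
theorem fex : ∀ c1 c2 c3 : Fin 27, gadj c1 c2 = false → c1 ≠ c2 → gadj c2 c3 = false →
    c2 ≠ c3 → c1 ≠ c3 → ∃ x : Fin 27, gadj x c1 = true ∧ gadj x c2 = true ∧
    gadj x c3 = false ∧ x ≠ c3 := by decide

def vtab (a : Fin 27) : Fin 6 → ZMod 2 := fun i => ((vbits a.val >>> i.val) % 2 : ℕ)

theorem vmem : ∀ a : Fin 27, vtab a ≠ 0 ∧ Q2 (vtab a) = 0 := by decide

def ve (a : Fin 27) : OVert2 := ⟨vtab a, vmem a⟩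

instance : DecidableEq OVert2 :=
  inferInstanceAs (DecidableEq {v : Fin 6 → ZMod 2 // v ≠ 0 ∧ Q2 v = 0})

theorem hinj : ∀ a b : Fin 27, ve a = ve b → a = b := by decide

theorem hsurj : ∀ v : OVert2, ∃ a : Fin 27, ve a = v := by decide

theorem hadj0 : ∀ a b : Fin 27, (ve a ≠ ve b ∧ Q2 ((ve a).1 + (ve b).1) = 0) ↔
    gadj a b = true := by decide

theorem adj_def (x y : OVert2) : OMinus62.Adj x y ↔ (x ≠ y ∧ Q2 (x.1 + y.1) = 0) := Iff.rfl

theorem hadj : ∀ a b : Fin 27, OMinus62.Adj (ve a) (ve b) ↔ gadj a b = true := by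
  intro a b; rw [adj_def]; exact hadj0 a b

section Core

variable {A : Type*} [Ring A]

private lemma tt12 {a b c : A} (h : a * b = 0) : a * b * c = 0 := by rw [h, zero_mul]
private lemma tt23 {a b c : A} (h : b * c = 0) : a * b * c = 0 := by
  rw [mul_assoc, h, mul_zero]
private lemma zz12 {a b c d : A} (h : a * b = 0) : a * b * c * d = 0 := by
  rw [h, zero_mul, zero_mul]
private lemma zz23 {a b c d : A} (h : b * c = 0) : a * b * c * d = 0 := by
  rw [mul_assoc a b c, h, mul_zero, zero_mul]
private lemma zz34 {a b c d : A} (h : c * d = 0) : a * b * c * d = 0 := by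
  rw [mul_assoc, h, mul_zero]
private lemma zz123 {a b c d : A} (h : a * b * c = 0) : a * b * c * d = 0 := by
  rw [h, zero_mul]
private lemma zz234 {a b c d : A} (h : b * c * d = 0) : a * b * c * d = 0 := by
  simp only [mul_assoc] at h ⊢
  rw [h, mul_zero]

/-- Bundle of magic-unitary facts transported to `Fin 27`. -/
structure MU (A : Type*) [Ring A] [StarRing A] (u : Fin 27 → Fin 27 → A) : Prop where
  sstar : ∀ i j, star (u i j) = u i j
  rowo : ∀ i j k, j ≠ k → u i j * u i k = 0
  colo : ∀ i j k, j ≠ k → u j i * u k i = 0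
  rsum : ∀ i, ∑ k, u i k = 1
  csum : ∀ i, ∑ k, u k i = 1
  z1 : ∀ i j k l, gadj i k = true → gadj j l = false → u i j * u k l = 0
  z2 : ∀ i j k l, gadj i k = false → gadj j l = true → u i j * u k l = 0

variable [StarRing A] {u : Fin 27 → Fin 27 → A} (h : MU A u)

lemma adj_ne {a b : Fin 27} (hab : gadj a b = true) : a ≠ b := by
  rintro rfl
  rw [girrefl] at hab
  exact Bool.false_ne_true hab

lemma adj_symm {a b : Fin 27} (hab : gadj a b = true) : gadj b a = true := by
  rw [gsymm]; exact hab

lemma nadj_symm {a b : Fin 27} (hab : gadj a b = false) : gadj b a = false := by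
  rw [gsymm]; exact hab

include h in
/-- rows a triangle, columns `(c1, c2, c1)` with `c1 ~ c2`. -/
lemma L1 {r1 r2 r3 c1 c2 : Fin 27}
    (a12 : gadj r1 r2 = true) (a13 : gadj r1 r3 = true) (a23 : gadj r2 r3 = true)
    (b12 : gadj c1 c2 = true) :
    u r1 c1 * u r2 c2 * u r3 c1 = 0 := by
  have hins : u r1 c1 * u r3 c1 = ∑ y, u r1 c1 * u y c2 * u r3 c1 := by
    calc u r1 c1 * u r3 c1 = u r1 c1 * 1 * u r3 c1 := by rw [mul_one]
    _ = u r1 c1 * (∑ y, u y c2) * u r3 c1 := by rw [h.csum c2]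
    _ = ∑ y, u r1 c1 * u y c2 * u r3 c1 := by rw [Finset.mul_sum, Finset.sum_mul]
  have hsingle : ∑ y, u r1 c1 * u y c2 * u r3 c1 = u r1 c1 * u r2 c2 * u r3 c1 := by
    apply Finset.sum_eq_single_of_mem r2 (Finset.mem_univ r2)
    intro y _ hy
    by_cases h1 : y = r1
    · subst h1; exact tt12 (h.rowo y c1 c2 (adj_ne b12))
    rcases h2 : gadj r1 y with _ | _
    · exact tt12 (h.z2 r1 c1 y c2 h2 b12)
    by_cases h3 : y = r3
    · subst h3; exact tt23 (h.rowo y c2 c1 (adj_ne (adj_symm b12)))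
    rcases h4 : gadj y r3 with _ | _
    · exact tt23 (h.z2 y c2 r3 c1 h4 (adj_symm b12))
    · exact absurd ((ftau2 r1 r3 y a13 (adj_symm h2) h4).trans
        (ftau2 r1 r3 r2 a13 (adj_symm a12) a23).symm) hy
  have hzero : u r1 c1 * u r3 c1 = 0 := h.colo c1 r1 r3 (adj_ne a13)
  rw [← hsingle, ← hins, hzero]

include h in
/-- rows a triangle, columns a path `c1 ~ c2 ~ c3`, `c1 ≁ c3`. -/
lemma L2 {r1 r2 r3 c1 c2 c3 : Fin 27}
    (a12 : gadj r1 r2 = true) (a13 : gadj r1 r3 = true) (a23 : gadj r2 r3 = true)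
    (b12 : gadj c1 c2 = true) (b23 : gadj c2 c3 = true) (b13 : gadj c1 c3 = false)
    (m13 : c1 ≠ c3) :
    u r1 c1 * u r2 c2 * u r3 c3 = 0 := by
  have hins : u r1 c1 * u r3 c3 = ∑ y, u r1 c1 * u y c2 * u r3 c3 := by
    calc u r1 c1 * u r3 c3 = u r1 c1 * 1 * u r3 c3 := by rw [mul_one]
    _ = u r1 c1 * (∑ y, u y c2) * u r3 c3 := by rw [h.csum c2]
    _ = ∑ y, u r1 c1 * u y c2 * u r3 c3 := by rw [Finset.mul_sum, Finset.sum_mul]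
  have hsingle : ∑ y, u r1 c1 * u y c2 * u r3 c3 = u r1 c1 * u r2 c2 * u r3 c3 := by
    apply Finset.sum_eq_single_of_mem r2 (Finset.mem_univ r2)
    intro y _ hy
    by_cases h1 : y = r1
    · subst h1; exact tt12 (h.rowo y c1 c2 (adj_ne b12))
    rcases h2 : gadj r1 y with _ | _
    · exact tt12 (h.z2 r1 c1 y c2 h2 b12)
    by_cases h3 : y = r3
    · subst h3; exact tt23 (h.rowo y c2 c3 (adj_ne b23))
    rcases h4 : gadj y r3 with _ | _
    · exact tt23 (h.z2 y c2 r3 c3 h4 b23)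
    · exact absurd ((ftau2 r1 r3 y a13 (adj_symm h2) h4).trans
        (ftau2 r1 r3 r2 a13 (adj_symm a12) a23).symm) hy
  have hzero : u r1 c1 * u r3 c3 = 0 := h.z1 r1 c1 r3 c3 a13 b13
  rw [← hsingle, ← hins, hzero]

include h in
/-- rows `r1 ~ r2`, `r1 ~ r3`, `r2 ≁ r3`; columns `c1 ~ c2`, `c1 ≁ c3`, `c2 ≁ c3`. -/
lemma L3 {r1 r2 r3 c1 c2 c3 : Fin 27}
    (a12 : gadj r1 r2 = true) (a13 : gadj r1 r3 = true) (a23 : gadj r2 r3 = false)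
    (n23 : r2 ≠ r3)
    (b12 : gadj c1 c2 = true) (b13 : gadj c1 c3 = false) (m13 : c1 ≠ c3)
    (b23 : gadj c2 c3 = false) (m23 : c2 ≠ c3) :
    u r1 c1 * u r2 c2 * u r3 c3 = 0 := by
  obtain ⟨hx1, hx2, -, hx4⟩ := ftau r1 r2 a12
  obtain ⟨hx5, hx6⟩ := f5 r1 r2 r3 a12 a13 a23 n23
  have hins : u r1 c1 * u r2 c2 * u r3 c3
      = ∑ y, u r1 c1 * u r2 c2 * u (gtau r1 r2) y * u r3 c3 := by
    calc u r1 c1 * u r2 c2 * u r3 c3 = u r1 c1 * u r2 c2 * 1 * u r3 c3 := by rw [mul_one]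
    _ = u r1 c1 * u r2 c2 * (∑ y, u (gtau r1 r2) y) * u r3 c3 := by rw [h.rsum (gtau r1 r2)]
    _ = ∑ y, u r1 c1 * u r2 c2 * u (gtau r1 r2) y * u r3 c3 := by
        rw [Finset.mul_sum, Finset.sum_mul]
  rw [hins]
  apply Finset.sum_eq_zero
  intro y _
  by_cases e2 : y = c2
  · subst e2; exact zz23 (h.colo y r2 (gtau r1 r2) (Ne.symm hx4))
  rcases g2 : gadj c2 y with _ | _
  · exact zz23 (h.z1 r2 c2 (gtau r1 r2) y (adj_symm hx2) g2)
  by_cases e3 : y = c3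
  · subst e3; exact zz34 (h.colo y (gtau r1 r2) r3 hx6)
  rcases g3 : gadj y c3 with _ | _
  · by_cases e1 : y = c1
    · subst e1; exact zz123 (L1 h a12 (adj_symm hx1) (adj_symm hx2) b12)
    rcases g1 : gadj c1 y with _ | _
    · exact zz123 (L2 h a12 (adj_symm hx1) (adj_symm hx2) b12 g2 g1 (Ne.symm e1))
    · have hy : y = gtau c1 c2 := ftau2 c1 c2 y b12 (adj_symm g1) (adj_symm g2)
      have hc := fgq c1 c2 c3 b12 b13 m13 b23 m23
      rw [← hy] at hc
      rw [hc] at g3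
      exact absurd g3 (by simp)
  · exact zz34 (h.z2 (gtau r1 r2) y r3 c3 hx5 g3)

include h in
/-- rows `(r1, r2, r1)` non-adjacent; columns pairwise distinct, `c1 ≁ c2`, `c2 ≁ c3`. -/
lemma L45 {r1 r2 c1 c2 c3 : Fin 27}
    (a12 : gadj r1 r2 = false) (n12 : r1 ≠ r2)
    (b12 : gadj c1 c2 = false) (m12 : c1 ≠ c2)
    (b23 : gadj c2 c3 = false) (m23 : c2 ≠ c3) (m13 : c1 ≠ c3) :
    u r1 c1 * u r2 c2 * u r1 c3 = 0 := by
  obtain ⟨x, hx1, hx2, hx3, hx4⟩ := fex c1 c2 c3 b12 m12 b23 m23 m13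
  have hins : u r1 c1 * u r2 c2 * u r1 c3 = ∑ y, u r1 c1 * u y x * u r2 c2 * u r1 c3 := by
    calc u r1 c1 * u r2 c2 * u r1 c3 = u r1 c1 * 1 * u r2 c2 * u r1 c3 := by rw [mul_one]
    _ = u r1 c1 * (∑ y, u y x) * u r2 c2 * u r1 c3 := by rw [h.csum x]
    _ = ∑ y, u r1 c1 * u y x * u r2 c2 * u r1 c3 := by
        rw [Finset.mul_sum, Finset.sum_mul, Finset.sum_mul]
  rw [hins]
  apply Finset.sum_eq_zero
  intro y _
  by_cases e1 : y = r1
  · subst e1; exact zz12 (h.rowo y c1 x (Ne.symm (adj_ne hx1)))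
  rcases g1 : gadj r1 y with _ | _
  · exact zz12 (h.z2 r1 c1 y x g1 (adj_symm hx1))
  by_cases e2 : y = r2
  · subst e2; exact zz23 (h.rowo y x c2 (adj_ne hx2))
  rcases g2 : gadj y r2 with _ | _
  · exact zz23 (h.z2 y x r2 c2 g2 hx2)
  · exact zz234 (L3 h g2 (adj_symm g1) (nadj_symm a12) (Ne.symm n12) hx2 hx3 hx4 b23 m23)

include h in
lemma core_comm {i j k l : Fin 27} (hik : gadj i k = false) (hjl : gadj j l = false) :
    u i j * u k l = u k l * u i j := by
  by_cases hik' : i = k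
  · subst hik'
    by_cases hjl' : j = l
    · subst hjl'; rfl
    · rw [h.rowo i j l hjl', h.rowo i l j (Ne.symm hjl')]
  by_cases hjl' : j = l
  · subst hjl'; rw [h.colo j i k hik', h.colo j k i (Ne.symm hik')]
  have hins : u i j * u k l = ∑ m, u i j * u k l * u i m := by
    calc u i j * u k l = u i j * u k l * 1 := by rw [mul_one]
    _ = u i j * u k l * (∑ m, u i m) := by rw [h.rsum i]
    _ = ∑ m, u i j * u k l * u i m := by rw [Finset.mul_sum]
  have hsingle : ∑ m, u i j * u k l * u i m = u i j * u k l * u i j := by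
    apply Finset.sum_eq_single_of_mem j (Finset.mem_univ j)
    intro m _ hm
    by_cases e1 : m = l
    · subst e1; exact tt23 (h.colo m k i (Ne.symm hik'))
    rcases g1 : gadj l m with _ | _
    · exact L45 h hik hik' hjl hjl' g1 (fun hh => e1 hh.symm) hm.symm
    · exact tt23 (h.z2 k l i m (nadj_symm hik) g1)
  have key : u i j * u k l = u i j * u k l * u i j := hins.trans hsingle
  have s1 : star (u i j * u k l) = u k l * u i j := by
    rw [star_mul, h.sstar, h.sstar]
  have s2 : star (u i j * u k l * u i j) = u i j * u k l * u i j := by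
    rw [star_mul, star_mul, h.sstar, h.sstar]
    exact (mul_assoc _ _ _).symm
  calc u i j * u k l = u i j * u k l * u i j := key
  _ = star (u i j * u k l * u i j) := s2.symm
  _ = star (u i j * u k l) := by rw [← key]
  _ = u k l * u i j := s1

end Core

end O62Aux

/-- For a magic unitary of `O⁻(6,2)`, entries `u_{ij}` and `u_{kl}` commute whenever
neither `(i,k)` nor `(j,l)` is an edge (equal vertices allowed). -/
theorem magic_unitary_comm_of_not_adj {A : Type*} [Ring A] [StarRing A] [Algebra ℂ A]
    (u : OVert2 → OVert2 → A) (hu : IsMagicUnitary OMinus62 A u)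
    (i j k l : OVert2) (hik : ¬OMinus62.Adj i k) (hjl : ¬OMinus62.Adj j l) :
    u i j * u k l = u k l * u i j := by
  classical
  have hbij : Function.Bijective O62Aux.ve :=
    ⟨fun {a b} hab => O62Aux.hinj a b hab, fun v => O62Aux.hsurj v⟩
  have hmu : O62Aux.MU A (fun a b => u (O62Aux.ve a) (O62Aux.ve b)) := by
    constructor
    · intro a b; exact hu.star_self _ _
    · intro a b c hbc; exact hu.row_orth _ _ _ (fun e => hbc (O62Aux.hinj _ _ e))
    · intro a b c hbc; exact hu.col_orth _ _ _ (fun e => hbc (O62Aux.hinj _ _ e))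
    · intro a
      rw [← hu.row_sum (O62Aux.ve a)]
      exact Fintype.sum_bijective O62Aux.ve hbij _ _ (fun b => rfl)
    · intro a
      rw [← hu.col_sum (O62Aux.ve a)]
      exact Fintype.sum_bijective O62Aux.ve hbij _ _ (fun b => rfl)
    · intro a b c d h1 h2
      refine hu.adj_mul_eq_zero _ _ _ _ ((O62Aux.hadj a c).mpr h1) (fun hA => ?_)
      rw [(O62Aux.hadj b d).mp hA] at h2
      simp at h2
    · intro a b c d h1 h2
      refine hu.adj_mul_eq_zero' _ _ _ _ (fun hA => ?_) ((O62Aux.hadj b d).mpr h2)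
      rw [(O62Aux.hadj a c).mp hA] at h1
      simp at h1
  obtain ⟨a, ha⟩ := O62Aux.hsurj i
  obtain ⟨b, hb⟩ := O62Aux.hsurj j
  obtain ⟨c, hc⟩ := O62Aux.hsurj k
  obtain ⟨d, hd⟩ := O62Aux.hsurj l
  have hik' : O62Aux.gadj a c = false := by
    cases hg : O62Aux.gadj a c
    · rfl
    · exfalso
      apply hik
      rw [← ha, ← hc]
      exact (O62Aux.hadj a c).mpr hg
  have hjl' : O62Aux.gadj b d = false := by
    cases hg : O62Aux.gadj b d
    · rfl
    · exfalso
      apply hjl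
      rw [← hb, ← hd]
      exact (O62Aux.hadj b d).mpr hg
  have hcomm := O62Aux.core_comm hmu hik' hjl'
  rw [← ha, ← hb, ← hc, ← hd]
  exact hcomm
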